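/- Let $\eta > 0$ and $k \geq 1$, and let $h_1, \dots, h_k$ be real numbers. Define the sequence $R_1, \dots, R_k$ by $R_1 = [h_1]_\eta$ and, for $2 \le t \le k$, $R_t = [h_t]_\eta$ if $h_t > R_{t-1}$ and $R_t = R_{t-1}$ otherwise, where $[x]_\eta := \eta \cdot \mathrm{round}(x/\eta)$. Then for every $t \in \{1,\dots,k\}$, $R_t = \max_{1 \le i \le t} [h_i]_\eta$. -/
import Mathlib

lemma my_round_mono {x y : ℝ} (hxy : x ≤ y) : round x ≤ round y := by
  rw [round_eq, round_eq]; exact Int.floor_le_floor (by linarith)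

/-- The simplified Ladder recursion `R₁ = [h₁]_η`, `R_t = [h_t]_η` if `h_t > R_{t−1}`
and `R_t = R_{t−1}` otherwise, displays the best rounded score so far:
`R_t = max_{1 ≤ i ≤ t} [h_i]_η`, where `[x]_η = η · round(x/η)`. -/
theorem ladder_displays_running_max (η : ℝ) (hη : 0 < η) (k : ℕ) (hk : 1 ≤ k)
    (h R : ℕ → ℝ)
    (hR1 : R 1 = η * (round (h 1 / η) : ℤ))
    (hRt : ∀ t, 2 ≤ t → t ≤ k →
      R t = if R (t - 1) < h t then η * (round (h t / η) : ℤ) else R (t - 1)) :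
    ∀ t, ∀ ht : 1 ≤ t, t ≤ k →
      R t = (Finset.Icc 1 t).sup' (Finset.nonempty_Icc.mpr ht)
        (fun i => η * (round (h i / η) : ℤ)) := by
  have hmul : ∀ s, 1 ≤ s → s ≤ k → ∃ m : ℤ, R s = η * m := by
    intro s
    induction s with
    | zero => omega
    | succ p ihp =>
      intro _ hsk
      rcases Nat.eq_zero_or_pos p with hp | hp
      · subst hp; exact ⟨round (h 1 / η), hR1⟩
      · have hrec := hRt (p + 1) (by omega) hsk
        simp only [Nat.add_sub_cancel] at hrec
        rcases ihp hp (by omega) with ⟨m, hm⟩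
        by_cases hc : R p < h (p + 1)
        · exact ⟨round (h (p+1) / η), by rw [hrec, if_pos hc]⟩
        · exact ⟨m, by rw [hrec, if_neg hc, hm]⟩
  intro t
  induction t with
  | zero => intro ht; omega
  | succ n ih =>
    intro ht hle
    rcases Nat.eq_zero_or_pos n with hn | hn
    · subst hn
      simp [hR1]
    · have hrec := hRt (n + 1) (by omega) hle
      simp only [Nat.add_sub_cancel] at hrec
      have hne : (Finset.Icc 1 n).Nonempty := Finset.nonempty_Icc.mpr hn
      have hIcc : insert (n + 1) (Finset.Icc 1 n) = Finset.Icc 1 (n + 1) :=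
        Finset.insert_Icc_right_eq_Icc_add_one (by omega)
      rw [← Finset.sup'_congr (Finset.insert_nonempty _ _) hIcc (fun x _ => rfl),
        Finset.sup'_insert (b := n+1) (H := hne), ← ih hn (by omega)]
      obtain ⟨m, hm⟩ := hmul n hn (by omega)
      rw [hrec]
      by_cases hc : R n < h (n + 1)
      · rw [if_pos hc]
        have hcast : (m : ℝ) ≤ (round (h (n+1) / η) : ℤ) := by
          have hdiv : (m : ℝ) ≤ h (n + 1) / η := by
            rw [le_div_iff₀ hη]; nlinarith [hm]
          have : (m : ℤ) ≤ round (h (n+1) / η) := by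
            have := my_round_mono hdiv
            rwa [round_intCast] at this
          exact_mod_cast this
        have hge : R n ≤ η * (round (h (n+1) / η) : ℤ) := by
          rw [hm]; exact mul_le_mul_of_nonneg_left hcast hη.le
        exact (max_eq_left hge).symm
      · rw [if_neg hc]
        push_neg at hc
        have hdiv : h (n + 1) / η ≤ (m : ℝ) := by
          rw [div_le_iff₀ hη]; nlinarith [hm]
        have hcast : (round (h (n+1) / η) : ℤ) ≤ m := by
          have := my_round_mono hdiv
          rwa [round_intCast] at this
        have hle' : η * (round (h (n+1) / η) : ℤ) ≤ R n := by
          rw [hm]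
          exact mul_le_mul_of_nonneg_left (by exact_mod_cast hcast) hη.le
        exact (max_eq_right hle').symm
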